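/- Let 𝒜' ⊂ ℂ³ be the arrangement defined by xyz(x−y)(x−z) = 0 (the deleted A₃ arrangement). Then 𝒜' is free with basis θ₁ = θ_E = x∂_x + y∂_y + z∂_z, θ₂ = y(x−y)∂_y, θ₃ = z(x−z)∂_z of D(𝒜'), so exp(𝒜') = (1, 2, 2). Moreover, for the hyperplane H : y − z = 0, one has θ₂(y−z) ∉ (y−z)·S and θ₃(y−z) ∉ (y−z)·S, but (θ₂+θ₃)(y−z) ∈ (y−z)·S; hence algebraic genericity of a hyperplane with respect to a minimal generating set depends on the choice of generators. -/

import Mathlib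

/-!
A derivation `θ ∈ D(𝒜')` has `θ(x) = a x`. The conditions at `y` and `x − y` give
`θ(y) = c y` with `x − y ∣ y (a − c)`, and since `y` does not vanish on `x = y` this forces
`θ(y) = a y − b y (x − y)`; likewise `θ(z) = a z − c' z (x − z)`, so `θ = a θ_E − b θ₂ − c' θ₃`.
The values of `θ_E, θ₂, θ₃` on `x, y, z` are triangular, which gives independence.
Divisibility by `y − z` is tested by substituting `y := z`: it sends `θ₂(y − z) = y (x − y)` to
`z (x − z)` and `θ₃(y − z) = −z (x − z)` to its negative, so only the sum vanishes.
-/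

open MvPolynomial

noncomputable section

/-- The polynomial ring `S = ℂ[x₁,…,x_ℓ]`. -/
abbrev PS (ℓ : ℕ) : Type := MvPolynomial (Fin ℓ) ℂ

/-- The module of ℂ-derivations of `S`. -/
abbrev Der (ℓ : ℕ) : Type := Derivation ℂ (PS ℓ) (PS ℓ)

/-- The logarithmic derivation module of a set of defining forms in a ℂ-algebra. -/
def logDer {R : Type} [CommRing R] [Algebra ℂ R] (A : Set R) :
    Submodule R (Derivation ℂ R R) where
  carrier := {θ | ∀ α ∈ A, θ α ∈ Ideal.span {α}}
  add_mem' := fun ha hb α hα => by simpa using add_mem (ha α hα) (hb α hα)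
  zero_mem' := fun α hα => by simp
  smul_mem' := fun c θ h α hα => by simpa using Ideal.mul_mem_left _ c (h α hα)

/-- The submodule `D₀` of derivations annihilating every defining form. -/
def logDer0 {R : Type} [CommRing R] [Algebra ℂ R] (A : Set R) :
    Submodule R (Derivation ℂ R R) where
  carrier := {θ | ∀ α ∈ A, θ α = 0}
  add_mem' := fun ha hb α hα => by simp [Set.mem_setOf_eq] at *; simp [ha α hα, hb α hα]
  zero_mem' := fun α hα => by simp
  smul_mem' := fun c θ h α hα => by simp [Set.mem_setOf_eq] at *; simp [h α hα]

/-- The Euler derivation `Σ xᵢ ∂ᵢ`. -/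
def euler (ℓ : ℕ) : Der ℓ := mkDerivation ℂ (fun i : Fin ℓ => X i)

/-- A derivation is homogeneous of (polynomial) degree `d` if it sends every variable to a
homogeneous polynomial of degree `d`. -/
def IsHomogDer {ℓ : ℕ} (θ : Der ℓ) (d : ℕ) : Prop := ∀ i, (θ (X i)).IsHomogeneous d

/-- A (nonzero) linear form. -/
def IsLinForm {ℓ : ℕ} (α : PS ℓ) : Prop := α.IsHomogeneous 1 ∧ α ≠ 0

/-- A minimal generating family of the logarithmic derivation module of `A`. -/
def IsMinGen {R : Type} [CommRing R] [Algebra ℂ R] (A : Set R) {s : ℕ}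
    (θ : Fin s → Derivation ℂ R R) : Prop :=
  Submodule.span R (Set.range θ) = logDer A ∧
    ∀ i, θ i ∉ Submodule.span R (θ '' {j | j ≠ i})

/-- A minimal generating family of `D₀(A)`. -/
def IsMinGen0 {R : Type} [CommRing R] [Algebra ℂ R] (A : Set R) {s : ℕ}
    (θ : Fin s → Derivation ℂ R R) : Prop :=
  Submodule.span R (Set.range θ) = logDer0 A ∧
    ∀ i, θ i ∉ Submodule.span R (θ '' {j | j ≠ i})

/-- `exp(A) = M`:  the multiset of degrees of a minimal homogeneous generating family
of `D(A)` is `M`. -/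
def HasExp {ℓ : ℕ} (A : Set (PS ℓ)) (M : Multiset ℕ) : Prop :=
  ∃ (s : ℕ) (θ : Fin s → Der ℓ) (d : Fin s → ℕ),
    (∀ i, IsHomogDer (θ i) (d i)) ∧ IsMinGen A θ ∧ M = Multiset.map d Finset.univ.val

/-- `exp₀(A) = M`: the multiset of degrees of a minimal homogeneous generating family
of `D₀(A)` is `M`. -/
def HasExp0 {ℓ : ℕ} (A : Set (PS ℓ)) (M : Multiset ℕ) : Prop :=
  ∃ (s : ℕ) (θ : Fin s → Der ℓ) (d : Fin s → ℕ),
    (∀ i, IsHomogDer (θ i) (d i)) ∧ IsMinGen0 A θ ∧ M = Multiset.map d Finset.univ.val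

/-- The rank of a finite set of linear forms (= codimension of the corresponding flat). -/
def rk {ℓ : ℕ} (B : Finset (PS ℓ)) : ℕ :=
  Module.finrank ℂ (Submodule.span ℂ (B : Set (PS ℓ)))

/-- `H = {α = 0}` is combinatorially generic with respect to the arrangement `A` in `ℂ^m`:
it contains no nonzero flat of `A`, i.e. adding it to any subarrangement raises the rank
until the ambient rank `m` is reached. -/
def CombGeneric {ℓ : ℕ} (α : PS ℓ) (A : Finset (PS ℓ)) (m : ℕ) : Prop :=
  ∀ B ⊆ A, rk (insert α B) = min (rk B + 1) m

/-- Two arrangements have the same combinatorics (isomorphic intersection lattices):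
there is a bijection of the hyperplanes preserving the rank of every subarrangement. -/
def SameComb {ℓ ℓ' : ℕ} (A₁ : Finset (PS ℓ)) (A₂ : Finset (PS ℓ')) : Prop :=
  ∃ e : PS ℓ → PS ℓ', Set.BijOn e A₁ A₂ ∧
    ∀ B ⊆ A₁, rk (B.image e) = rk B

/-- The number of hyperplanes of the restriction of `A` to `{α = 0}`: the number of
proportionality classes of the (nonzero) images of the forms of `A` in `S/(α)`. -/
def nRes {ℓ : ℕ} (α : PS ℓ) (A : Finset (PS ℓ)) : ℕ :=
  letI : DecidableEq (Submodule ℂ (PS ℓ ⧸ Ideal.span {α})) := Classical.decEq _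
  (A.image fun β =>
    Submodule.span ℂ {Ideal.Quotient.mk (Ideal.span {α}) β}).card

end

noncomputable section

/-- `θ₂ = y(x−y)∂_y`. -/
def theta2 : Der 3 := mkDerivation ℂ
  (fun i : Fin 3 => if i = 1 then (X 1 : PS 3) * (X 0 - X 1) else 0)

/-- `θ₃ = z(x−z)∂_z`. -/
def theta3 : Der 3 := mkDerivation ℂ
  (fun i : Fin 3 => if i = 2 then (X 2 : PS 3) * (X 0 - X 2) else 0)

/-- The deleted `A₃` arrangement `xyz(x−y)(x−z) = 0`. -/
def deletedA3 : Set (PS 3) := {X 0, X 1, X 2, X 0 - X 1, X 0 - X 2}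

section Substitution

variable {R σ : Type*} [CommRing R] [DecidableEq σ]

theorem X_sub_X_dvd_iff (i j : σ) (p : MvPolynomial σ R) :
    (X i : MvPolynomial σ R) - X j ∣ p ↔
      aeval (Function.update X i (X j : MvPolynomial σ R)) p = 0 := by
  set f : MvPolynomial σ R →ₐ[R] MvPolynomial σ R := aeval (Function.update X i (X j))
  set I := Ideal.span {(X i : MvPolynomial σ R) - X j}
  constructor
  · rintro ⟨q, rfl⟩
    simp [f, Function.update_apply]
  · intro hp
    have hcomp : (Ideal.Quotient.mkₐ R I).comp f = Ideal.Quotient.mkₐ R I := by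
      refine algHom_ext fun k => ?_
      rcases eq_or_ne k i with rfl | hk
      · simpa [f, Ideal.Quotient.mk_eq_mk_iff_sub_mem] using
          I.neg_mem (Ideal.mem_span_singleton_self _)
      · simp [f, hk]
    rw [← Ideal.mem_span_singleton, ← Ideal.Quotient.eq_zero_iff_mem]
    simpa [hp] using (congrArg (· p) hcomp).symm

theorem X_sub_X_dvd_X_mul_iff [IsDomain R] {i j : σ} (hij : i ≠ j) (q : MvPolynomial σ R) :
    X i - X j ∣ X j * q ↔ X i - X j ∣ q := by
  simp [X_sub_X_dvd_iff, Function.update_of_ne hij.symm, X_ne_zero]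

theorem exists_eq_X_mul_sub_of_dvd [IsDomain R] {i j : σ} (hij : i ≠ j)
    {a v : MvPolynomial σ R} (hv : X j ∣ v) (h : X i - X j ∣ X i * a - v) :
    ∃ b, v = X j * a - b * (X j * (X i - X j)) := by
  obtain ⟨c, rfl⟩ := hv
  have hdvd : X i - X j ∣ X j * (a - c) := by
    convert dvd_sub h (dvd_mul_right (X i - X j) a) using 1
    ring
  obtain ⟨b, hb⟩ := (X_sub_X_dvd_X_mul_iff hij _).1 hdvd
  exact ⟨b, by linear_combination (-X j) * hb⟩

end Substitution

theorem Derivation.sum_apply {R A M ι : Type*} [CommSemiring R] [CommSemiring A] [AddCommMonoid M]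
    [Algebra R A] [Module A M] [Module R M] (s : Finset ι) (D : ι → Derivation R A M) (a : A) :
    (∑ i ∈ s, D i) a = ∑ i ∈ s, D i a := by
  simp only [← Derivation.coeFnAddMonoidHom_apply, map_sum, Finset.sum_apply]

section Derivations

variable {ℓ : ℕ}

@[simp]
theorem euler_X (i : Fin ℓ) : euler ℓ (X i) = X i := mkDerivation_X _ _ _

theorem euler_eq_sum_X_smul_pderiv : euler ℓ = ∑ i, (X i : PS ℓ) • pderiv i := by
  refine derivation_ext fun k => ?_
  simp [Derivation.sum_apply, pderiv_X, Pi.single_apply]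

theorem euler_apply_of_isHomogeneous {n : ℕ} {φ : PS ℓ} (h : φ.IsHomogeneous n) :
    euler ℓ φ = n • φ := by
  simpa [euler_eq_sum_X_smul_pderiv, Derivation.sum_apply] using h.sum_X_mul_pderiv

theorem euler_mem_logDer {A : Set (PS ℓ)} (hA : ∀ α ∈ A, ∃ n, α.IsHomogeneous n) :
    euler ℓ ∈ logDer A := fun α hα => by
  obtain ⟨n, hn⟩ := hA α hα
  rw [euler_apply_of_isHomogeneous hn, nsmul_eq_mul]
  exact Ideal.mul_mem_left _ _ (Ideal.mem_span_singleton_self α)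

theorem isHomogDer_mkDerivation {d : ℕ} {f : Fin ℓ → PS ℓ} (hf : ∀ i, (f i).IsHomogeneous d) :
    IsHomogDer (mkDerivation ℂ f) d := fun i => by
  simpa [mkDerivation_X] using hf i

theorem isHomogDer_euler : IsHomogDer (euler ℓ) 1 :=
  isHomogDer_mkDerivation fun i => isHomogeneous_X ℂ i

end Derivations

section LogarithmicDerivations

variable {R : Type} [CommRing R] [Algebra ℂ R]

theorem mem_logDer_insert {θ : Derivation ℂ R R} {α : R} {A : Set R} :
    θ ∈ logDer (insert α A) ↔ θ α ∈ Ideal.span {α} ∧ θ ∈ logDer A :=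
  Set.forall_mem_insert

theorem mem_logDer_singleton {θ : Derivation ℂ R R} {α : R} :
    θ ∈ logDer {α} ↔ θ α ∈ Ideal.span {α} :=
  forall_eq

theorem isMinGen_of_linearIndependent [Nontrivial R] {A : Set R} {s : ℕ}
    {θ : Fin s → Derivation ℂ R R} (hli : LinearIndependent R θ)
    (hspan : Submodule.span R (Set.range θ) = logDer A) : IsMinGen A θ :=
  ⟨hspan, fun _ => hli.notMem_span_image (by simp)⟩

end LogarithmicDerivations

theorem hasExp_of_linearIndependent {ℓ s : ℕ} {A : Set (PS ℓ)} {θ : Fin s → Der ℓ}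
    {d : Fin s → ℕ} (hd : ∀ i, IsHomogDer (θ i) (d i)) (hli : LinearIndependent (PS ℓ) θ)
    (hspan : Submodule.span (PS ℓ) (Set.range θ) = logDer A) :
    HasExp A (Multiset.map d Finset.univ.val) :=
  ⟨s, θ, d, hd, isMinGen_of_linearIndependent hli hspan, rfl⟩

@[simp]
theorem theta2_X (i : Fin 3) :
    theta2 (X i) = if i = 1 then (X 1 : PS 3) * (X 0 - X 1) else 0 :=
  mkDerivation_X _ _ _

@[simp]
theorem theta3_X (i : Fin 3) :
    theta3 (X i) = if i = 2 then (X 2 : PS 3) * (X 0 - X 2) else 0 :=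
  mkDerivation_X _ _ _

theorem mem_logDer_deletedA3_iff {θ : Der 3} :
    θ ∈ logDer deletedA3 ↔ X 0 ∣ θ (X 0) ∧ X 1 ∣ θ (X 1) ∧ X 2 ∣ θ (X 2) ∧
      X 0 - X 1 ∣ θ (X 0) - θ (X 1) ∧ X 0 - X 2 ∣ θ (X 0) - θ (X 2) := by
  simp only [deletedA3, mem_logDer_insert, mem_logDer_singleton, Ideal.mem_span_singleton,
    map_sub]

theorem euler_mem_logDer_deletedA3 : euler 3 ∈ logDer deletedA3 := by
  refine euler_mem_logDer fun α hα => ⟨1, ?_⟩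
  have hX := isHomogeneous_X ℂ (σ := Fin 3)
  rcases hα with rfl | rfl | rfl | rfl | rfl
  exacts [hX 0, hX 1, hX 2, (hX 0).sub (hX 1), (hX 0).sub (hX 2)]

theorem theta2_mem_logDer_deletedA3 : theta2 ∈ logDer deletedA3 := by
  simp [mem_logDer_deletedA3_iff]

theorem theta3_mem_logDer_deletedA3 : theta3 ∈ logDer deletedA3 := by
  simp [mem_logDer_deletedA3_iff]

theorem linearIndependent_euler_theta2_theta3 :
    LinearIndependent (PS 3) ![euler 3, theta2, theta3] := by
  rw [Fintype.linearIndependent_iff]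
  intro g hg
  have hg_X (k : Fin 3) := congrArg (fun θ : Der 3 => θ (X k)) hg
  have h0 : g 0 = 0 := by simpa [Fin.sum_univ_three, X_ne_zero] using hg_X 0
  have hne : ∀ k, (X k : PS 3) * (X 0 - X k) = 0 ↔ k = 0 := by
    simp [X_ne_zero, sub_eq_zero, X_injective.eq_iff, eq_comm]
  have h1 : g 1 = 0 := by simpa [Fin.sum_univ_three, h0, hne] using hg_X 1
  have h2 : g 2 = 0 := by simpa [Fin.sum_univ_three, h0, hne] using hg_X 2
  intro i
  fin_cases i
  exacts [h0, h1, h2]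

theorem logDer_deletedA3_le_span :
    logDer deletedA3 ≤ Submodule.span (PS 3) {euler 3, theta2, theta3} := by
  intro θ hθ
  obtain ⟨⟨a, ha⟩, hX1, hX2, hX01, hX02⟩ := mem_logDer_deletedA3_iff.1 hθ
  rw [ha] at hX01 hX02
  obtain ⟨b, hb⟩ := exists_eq_X_mul_sub_of_dvd (by decide) hX1 hX01
  obtain ⟨c, hc⟩ := exists_eq_X_mul_sub_of_dvd (by decide) hX2 hX02
  have hθ_eq : θ = a • euler 3 - b • theta2 - c • theta3 := by
    refine derivation_ext fun i => ?_
    fin_cases i <;> simp [ha, hb, hc, mul_comm]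
  rw [hθ_eq]
  refine sub_mem (sub_mem ?_ ?_) ?_ <;>
    exact Submodule.smul_mem _ _ (Submodule.subset_span (by simp))

theorem span_euler_theta2_theta3 :
    Submodule.span (PS 3) {euler 3, theta2, theta3} = logDer deletedA3 := by
  refine le_antisymm ?_ logDer_deletedA3_le_span
  rw [Submodule.span_le]
  rintro θ (rfl | rfl | rfl)
  exacts [euler_mem_logDer_deletedA3, theta2_mem_logDer_deletedA3, theta3_mem_logDer_deletedA3]

theorem isHomogDer_theta2 : IsHomogDer theta2 2 := by
  refine isHomogDer_mkDerivation fun i => ?_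
  split_ifs
  exacts [(isHomogeneous_X ℂ 1).mul ((isHomogeneous_X ℂ 0).sub (isHomogeneous_X ℂ 1)),
    isHomogeneous_zero _ _ _]

theorem isHomogDer_theta3 : IsHomogDer theta3 2 := by
  refine isHomogDer_mkDerivation fun i => ?_
  split_ifs
  exacts [(isHomogeneous_X ℂ 2).mul ((isHomogeneous_X ℂ 0).sub (isHomogeneous_X ℂ 2)),
    isHomogeneous_zero _ _ _]

theorem hasExp_deletedA3 : HasExp deletedA3 {1, 2, 2} := by
  have hd : ∀ i, IsHomogDer (![euler 3, theta2, theta3] i) (![1, 2, 2] i) := by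
    intro i
    fin_cases i
    exacts [isHomogDer_euler, isHomogDer_theta2, isHomogDer_theta3]
  have hspan : Submodule.span (PS 3) (Set.range ![euler 3, theta2, theta3]) =
      logDer deletedA3 := by
    rw [← span_euler_theta2_theta3, Matrix.range_cons, Matrix.range_cons_cons_empty,
      Set.singleton_union]
  exact hasExp_of_linearIndependent hd linearIndependent_euler_theta2_theta3 hspan

/-- the deleted `A₃` arrangement is free with basis `θ_E, θ₂ = y(x−y)∂_y,
θ₃ = z(x−z)∂_z`, so `exp = (1,2,2)`; moreover for `H : y − z = 0` one has
`θ₂(y−z), θ₃(y−z) ∉ (y−z)` but `(θ₂+θ₃)(y−z) ∈ (y−z)`, so algebraic genericity depends on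
the choice of generators. -/
theorem deletedA3_free_and_genericity_depends_on_generators :
    euler 3 ∈ logDer deletedA3 ∧ theta2 ∈ logDer deletedA3 ∧ theta3 ∈ logDer deletedA3 ∧
    LinearIndependent (PS 3) ![euler 3, theta2, theta3] ∧
    Submodule.span (PS 3) {euler 3, theta2, theta3} = logDer deletedA3 ∧
    IsHomogDer (euler 3) 1 ∧ IsHomogDer theta2 2 ∧ IsHomogDer theta3 2 ∧
    HasExp deletedA3 {1, 2, 2} ∧
    theta2 ((X 1 : PS 3) - X 2) ∉ Ideal.span {(X 1 : PS 3) - X 2} ∧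
    theta3 ((X 1 : PS 3) - X 2) ∉ Ideal.span {(X 1 : PS 3) - X 2} ∧
    (theta2 + theta3) ((X 1 : PS 3) - X 2) ∈ Ideal.span {(X 1 : PS 3) - X 2} := by
  refine ⟨euler_mem_logDer_deletedA3, theta2_mem_logDer_deletedA3, theta3_mem_logDer_deletedA3,
    linearIndependent_euler_theta2_theta3, span_euler_theta2_theta3, isHomogDer_euler,
    isHomogDer_theta2, isHomogDer_theta3, hasExp_deletedA3, ?_, ?_, ?_⟩ <;>
    simp [Ideal.mem_span_singleton, X_sub_X_dvd_iff, X_ne_zero, sub_eq_zero, X_injective.eq_iff]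

end
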